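/- Let H be Hermitian on a finite-dimensional space with nondegenerate spectrum, |Ψ₀⟩ a unit vector, ρ_d = Σ_E |⟨E|Ψ₀⟩|²|E⟩⟨E|, and V any operator. Then the infinite-time average of |⟨Ψ(t)|V|Ψ(t)⟩|², where |Ψ(t)⟩ = e^{-iHt}|Ψ₀⟩, under the second no-resonance condition equals |tr(ρ_d V)|² + tr(ρ_d V ρ_d V†) − Σ_E |⟨E|V|E⟩|² |⟨E|Ψ₀⟩|⁴. -/

import Mathlib

/-!
Write `b_{jk} = conj(a_j) V_{jk} a_k`, so that `⟨Ψ(t)|V|Ψ(t)⟩ = ∑ b_{jk} e^{i(E_j - E_k)t}`.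
Its squared modulus is a finite sum of terms `b_{jk} conj(b_{lm}) e^{i(E_j - E_k - E_l + E_m)t}`,
and the time average kills every term with nonzero frequency. By the second no-resonance
condition the frequency vanishes only when `j = k ∧ l = m`, which gives `|tr(ρ_d V)|²`, or when
`(j, k) = (l, m)`, which gives `tr(ρ_d V ρ_d V†)`; the quadruples `j = k = l = m` lie in both
families, which accounts for the subtracted term.
-/

open Filter
open scoped BigOperators ComplexConjugate

/-- The `k`-th no-resonance condition for eigenvalues `E : Fin D → ℝ`. -/
def NoResonance {D : ℕ} (E : Fin D → ℝ) (k : ℕ) : Prop :=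
  ∀ α β : Fin k → Fin D,
    (∑ i, E (α i)) = (∑ i, E (β i)) →
    Multiset.map α Finset.univ.val = Multiset.map β Finset.univ.val

/-- `HasTimeAvg f L` : the infinite-time average `lim_{T→∞} (1/T)∫_0^T f(t) dt` equals `L`. -/
def HasTimeAvg (f : ℝ → ℝ) (L : ℝ) : Prop :=
  Tendsto (fun T : ℝ => (1 / T) * ∫ t in (0:ℝ)..T, f t) atTop (nhds L)

open Complex MeasureTheory

theorem hasTimeAvg_const (c : ℝ) : HasTimeAvg (fun _ => c) c := by
  refine tendsto_const_nhds.congr' ?_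
  filter_upwards [eventually_ne_atTop 0] with T hT
  rw [intervalIntegral.integral_const, smul_eq_mul, sub_zero]
  field_simp

theorem hasTimeAvg_zero_of_abs_integral_le {f : ℝ → ℝ} {C : ℝ}
    (h : ∀ T, |∫ t in (0:ℝ)..T, f t| ≤ C) : HasTimeAvg f 0 := by
  have hC : Tendsto (fun T : ℝ => T⁻¹ * C) atTop (nhds 0) := by
    simpa using tendsto_inv_atTop_zero.mul_const C
  refine squeeze_zero_norm' ?_ hC
  filter_upwards [eventually_gt_atTop 0] with T hT
  rw [Real.norm_eq_abs, abs_mul, one_div, abs_of_pos (inv_pos.2 hT)]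
  exact mul_le_mul_of_nonneg_left (h T) (inv_nonneg.2 hT.le)

theorem HasTimeAvg.sum {ι : Type*} {s : Finset ι} {f : ι → ℝ → ℝ} {L : ι → ℝ}
    (hf : ∀ i ∈ s, ∀ T, IntervalIntegrable (f i) volume 0 T)
    (h : ∀ i ∈ s, HasTimeAvg (f i) (L i)) :
    HasTimeAvg (fun t => ∑ i ∈ s, f i t) (∑ i ∈ s, L i) := by
  refine (tendsto_finsetSum s h).congr fun T => ?_
  rw [intervalIntegral.integral_finsetSum fun i hi => hf i hi T, Finset.mul_sum]

theorem integral_re_mul_exp_I_mul {ω : ℝ} (hω : ω ≠ 0) (c : ℂ) (T : ℝ) :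
    ∫ t in (0:ℝ)..T, (c * exp (I * ω * t)).re = (c * ((exp (I * ω * T) - 1) / (I * ω))).re := by
  have hIω : I * ω ≠ 0 := mul_ne_zero I_ne_zero (ofReal_ne_zero.2 hω)
  have := intervalIntegral.intervalIntegral_re (μ := volume) (a := 0) (b := T)
    (f := fun t : ℝ => c * exp (I * ω * t)) (Continuous.intervalIntegrable (by fun_prop) _ _)
  simp only [RCLike.re_to_complex] at this
  rw [this, intervalIntegral.integral_const_mul, integral_exp_mul_complex hIω]
  simp

theorem hasTimeAvg_re_mul_exp_I_mul (c : ℂ) (ω : ℝ) :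
    HasTimeAvg (fun t => (c * exp (I * ω * t)).re) (if ω = 0 then c.re else 0) := by
  split_ifs with hω
  · simpa [hω] using hasTimeAvg_const c.re
  refine hasTimeAvg_zero_of_abs_integral_le (C := ‖c‖ * (2 / |ω|)) fun T => ?_
  rw [integral_re_mul_exp_I_mul hω]
  refine (abs_re_le_norm _).trans ?_
  rw [norm_mul, norm_div, norm_mul, norm_I, norm_real, one_mul, Real.norm_eq_abs]
  gcongr
  calc ‖exp (I * ω * T) - 1‖ ≤ ‖exp (I * ω * T)‖ + ‖(1 : ℂ)‖ := norm_sub_le _ _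
    _ = 2 := by rw [mul_assoc, ← ofReal_mul, norm_exp_I_mul_ofReal]; norm_num

theorem exp_I_mul_mul_conj_exp_I_mul (u v t : ℝ) :
    exp (I * u * t) * conj (exp (I * v * t)) = exp (I * ((u - v : ℝ) : ℂ) * t) := by
  rw [← exp_conj, ← exp_add]
  congr 1
  simp only [map_mul, conj_I, conj_ofReal, ofReal_sub]
  ring

theorem norm_sq_sum_mul_exp_I_mul {ι : Type*} [Fintype ι] (b : ι → ℂ) (ν : ι → ℝ) (t : ℝ) :
    ‖∑ x, b x * exp (I * ν x * t)‖ ^ 2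
      = ∑ p : ι × ι, (b p.1 * conj (b p.2) * exp (I * ((ν p.1 - ν p.2 : ℝ) : ℂ) * t)).re := by
  rw [← ofReal_re (‖_‖ ^ 2), ofReal_pow, ← mul_conj', map_sum, Finset.sum_mul_sum,
    Fintype.sum_prod_type]
  simp only [re_sum]
  refine Finset.sum_congr rfl fun x _ => Finset.sum_congr rfl fun y _ => ?_
  rw [← exp_I_mul_mul_conj_exp_I_mul, map_mul]
  ring_nf

theorem hasTimeAvg_norm_sq_sum_mul_exp_I_mul {ι : Type*} [Fintype ι] (b : ι → ℂ) (ν : ι → ℝ) :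
    HasTimeAvg (fun t => ‖∑ x, b x * exp (I * ν x * t)‖ ^ 2)
      (∑ x, ∑ y, if ν x = ν y then (b x * conj (b y)).re else 0) := by
  have := HasTimeAvg.sum (s := Finset.univ)
    (fun p _ T => Continuous.intervalIntegrable (by fun_prop) _ _)
    (fun (p : ι × ι) _ => hasTimeAvg_re_mul_exp_I_mul (b p.1 * conj (b p.2)) (ν p.1 - ν p.2))
  simp_rw [norm_sq_sum_mul_exp_I_mul]
  simpa only [sub_eq_zero, Fintype.sum_prod_type] using this

theorem NoResonance.sub_eq_sub_iff {D : ℕ} {E : Fin D → ℝ} (hE : NoResonance E 2)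
    {j k l m : Fin D} : E j - E k = E l - E m ↔ j = k ∧ l = m ∨ j = l ∧ k = m := by
  refine ⟨fun h => ?_, by rintro (⟨rfl, rfl⟩ | ⟨rfl, rfl⟩) <;> ring⟩
  have hpair : j ::ₘ {m} = l ::ₘ {k} := by
    simpa [Fin.univ_val_map, List.ofFn_succ, ← Multiset.cons_coe] using
      hE ![j, m] ![l, k] (by simp only [Fin.sum_univ_two, Matrix.cons_val_zero, Matrix.cons_val_one]; linarith)
  rcases Multiset.cons_eq_cons.1 hpair with ⟨hjl, hmk⟩ | ⟨-, cs, hm, hk⟩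
  · exact Or.inr ⟨hjl, (Multiset.singleton_inj.1 hmk).symm⟩
  · rw [Multiset.singleton_eq_cons_iff] at hm hk
    exact Or.inl ⟨hk.1.symm, hm.1.symm⟩

theorem sum_sum_ite_diag_or_eq {ι M : Type*} [Fintype ι] [DecidableEq ι] [AddCommGroup M]
    (f : ι × ι → ι × ι → M) :
    ∑ x, ∑ y, (if x.1 = x.2 ∧ y.1 = y.2 ∨ x = y then f x y else 0)
      = ∑ j, ∑ l, f (j, j) (l, l) + ∑ x, f x x - ∑ j, f (j, j) (j, j) := by
  have hor : ∀ (P Q : Prop) [Decidable P] [Decidable Q] (v : M), (if P ∨ Q then v else 0)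
      = (if P then v else 0) + (if Q then v else 0) - (if P ∧ Q then v else 0) := by
    intros; split_ifs <;> simp_all
  simp_rw [hor, Finset.sum_sub_distrib, Finset.sum_add_distrib]
  simp [Fintype.sum_prod_type, ite_and]

theorem sum_sum_re_mul_conj {ι : Type*} [Fintype ι] (w : ι → ℂ) :
    ∑ j, ∑ l, (w j * conj (w l)).re = ‖∑ j, w j‖ ^ 2 := by
  rw [← ofReal_re (‖_‖ ^ 2), ofReal_pow, ← mul_conj', map_sum, Finset.sum_mul_sum, re_sum]
  simp only [re_sum]

theorem timeAvg_single_error_fidelity_general {D : ℕ}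
    (E : Fin D → ℝ) (hE : NoResonance E 2)
    (a : Fin D → ℂ)
    (V : Matrix (Fin D) (Fin D) ℂ) :
    HasTimeAvg
      (fun t => (‖∑ j, ∑ k,
        conj (a j) * Complex.exp (Complex.I * (E j : ℂ) * (t : ℂ)) * V j k *
          Complex.exp (-Complex.I * (E k : ℂ) * (t : ℂ)) * a k‖) ^ 2)
      ((‖∑ j, ((‖a j‖) ^ 2 : ℂ) * V j j‖) ^ 2
        + ∑ j, ∑ k, (‖a j‖) ^ 2 * (‖a k‖) ^ 2 *
            (‖V j k‖) ^ 2
        - ∑ j, (‖V j j‖) ^ 2 * (‖a j‖) ^ 4) := by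
  set b : Fin D × Fin D → ℂ := fun p => conj (a p.1) * V p.1 p.2 * a p.2
  have hamp : ∀ t : ℝ, ∑ j, ∑ k, conj (a j) * exp (I * E j * t) * V j k *
      exp (-I * E k * t) * a k = ∑ p, b p * exp (I * ((E p.1 - E p.2 : ℝ) : ℂ) * t) := by
    intro t
    rw [Fintype.sum_prod_type]
    refine Finset.sum_congr rfl fun j _ => Finset.sum_congr rfl fun k _ => ?_
    rw [ofReal_sub, mul_sub, sub_mul, sub_eq_add_neg, exp_add, ← neg_mul, ← neg_mul]
    ring
  have hres : ∀ x y : Fin D × Fin D,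
      E x.1 - E x.2 = E y.1 - E y.2 ↔ x.1 = x.2 ∧ y.1 = y.2 ∨ x = y := fun x y => by
    rw [hE.sub_eq_sub_iff, Prod.ext_iff]
  have hdiag : ∀ j, b (j, j) = (‖a j‖ : ℂ) ^ 2 * V j j := fun j => by
    rw [← conj_mul']; ring
  have hnorm : ∀ p, ‖b p‖ ^ 2 = ‖a p.1‖ ^ 2 * ‖a p.2‖ ^ 2 * ‖V p.1 p.2‖ ^ 2 := fun p => by
    simp only [b, norm_mul, RCLike.norm_conj]; ring
  simp only [hamp]
  convert hasTimeAvg_norm_sq_sum_mul_exp_I_mul b (fun p => E p.1 - E p.2) using 1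
  simp only [hres]
  rw [sum_sum_ite_diag_or_eq, sum_sum_re_mul_conj]
  simp only [mul_conj', ← ofReal_pow, ofReal_re, hnorm]
  simp only [hdiag, ofReal_pow, Fintype.sum_prod_type]
  congr 1
  exact Finset.sum_congr rfl fun j _ => by ring

/-- **Time-averaged single-error fidelity.** In the eigenbasis of a Hermitian `H` with
nondegenerate spectrum `E` satisfying the second no-resonance condition, with `a_j = ⟨E_j|Ψ₀⟩`
the coefficients of a unit vector and `V` the matrix of an operator in the eigenbasis, the
infinite-time average of `|⟨Ψ(t)|V|Ψ(t)⟩|²` (where `|Ψ(t)⟩ = e^{-iHt}|Ψ₀⟩`) equals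
`|tr(ρ_d V)|² + tr(ρ_d V ρ_d V†) − ∑_E |⟨E|V|E⟩|²|⟨E|Ψ₀⟩|⁴`. -/
theorem timeAvg_single_error_fidelity {D : ℕ}
    (E : Fin D → ℝ) (hnd : Function.Injective E) (hE : NoResonance E 2)
    (a : Fin D → ℂ) (ha : ∑ j, (‖a j‖) ^ 2 = 1)
    (V : Matrix (Fin D) (Fin D) ℂ) :
    HasTimeAvg
      (fun t => (‖∑ j, ∑ k,
        conj (a j) * Complex.exp (Complex.I * (E j : ℂ) * (t : ℂ)) * V j k *
          Complex.exp (-Complex.I * (E k : ℂ) * (t : ℂ)) * a k‖) ^ 2)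
      ((‖∑ j, ((‖a j‖) ^ 2 : ℂ) * V j j‖) ^ 2
        + ∑ j, ∑ k, (‖a j‖) ^ 2 * (‖a k‖) ^ 2 *
            (‖V j k‖) ^ 2
        - ∑ j, (‖V j j‖) ^ 2 * (‖a j‖) ^ 4) :=
  timeAvg_single_error_fidelity_general E hE a V
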